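/- arXiv:1604.07149 — 4 statements merged into one kernel-verified Lean document; each statement's English description precedes it below -/
import Mathlib

section
/- Let 𝔤 be a finite-dimensional simple Lie algebra over a field of characteristic zero, equipped with a ℤ-grading 𝔤 = ⊕_{i=−ν}^{ν} 𝔤_i of depth ν ≥ 1 such that 𝔤_{i+1} = ⁅𝔤_1, 𝔤_i⁆ for all 1 ≤ i < ν. Then for every integer i with 0 < i < ν, the centralizer of 𝔤_1 in 𝔤_i is trivial: if Y ∈ 𝔤_i satisfies ⁅Y, 𝔤_1⁆ = 0, then Y = 0. -/
/-!
Let `Y ∈ 𝔤_i` commute with `𝔤_1`, and let `U` be the subspace generated from `Y` by the brackets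
with homogeneous elements of nonpositive degree. Since `⁅𝔤_1, 𝔤_j⁆ ⊆ 𝔤_{j+1}` has degree `≤ 0` or
equal to `1` for `j ≤ 0`, the Leibniz rule shows that `U` is also stable under `𝔤_1`, hence under
every `𝔤_j` with `j ≥ 1`, which is generated by `𝔤_1`. So `U` is an ideal. It lies in degrees
`≤ i < ν`, so it misses `𝔤_ν ≠ 0`; by simplicity `U = 0`, whence `Y = 0`.
-/

namespace Submodule

variable {R L : Type*} [CommRing R] [LieRing L] [LieAlgebra R L]

def adStabilizer (U : Submodule R L) : LieSubalgebra R L where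
  carrier := {a | ∀ u ∈ U, ⁅a, u⁆ ∈ U}
  zero_mem' u _ := by simp
  add_mem' ha hb u hu := by simpa only [add_lie] using U.add_mem (ha u hu) (hb u hu)
  smul_mem' t a ha u hu := by simpa only [smul_lie] using U.smul_mem t (ha u hu)
  lie_mem' {a b} ha hb u hu := by
    simpa only [lie_lie] using U.sub_mem (ha _ (hb u hu)) (hb _ (ha u hu))

def toLieIdeal (U : Submodule R L) (hU : U.adStabilizer = ⊤) : LieIdeal R L where
  toSubmodule := U
  lie_mem {a _} hu := (hU ▸ LieSubalgebra.mem_top a : a ∈ U.adStabilizer) _ hu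

theorem eq_bot_or_eq_top_of_adStabilizer_eq_top [LieAlgebra.IsSimple R L] (U : Submodule R L)
    (hU : U.adStabilizer = ⊤) : U = ⊥ ∨ U = ⊤ := by
  rcases LieAlgebra.IsSimple.eq_bot_or_eq_top (U.toLieIdeal hU) with h | h
  · exact .inl (congrArg LieSubmodule.toSubmodule h)
  · exact .inr (congrArg LieSubmodule.toSubmodule h)

end Submodule

namespace LieAlgebra

variable {R L : Type*} [CommRing R] [LieRing L] [LieAlgebra R L]

variable (R) in
def adClosure (S : Set L) (Y : L) : Submodule R L :=
  sInf {V | Y ∈ V ∧ S ⊆ V.adStabilizer}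

variable {S : Set L} {Y : L}

theorem mem_adClosure_self : Y ∈ adClosure R S Y :=
  Submodule.mem_sInf.2 fun _ hV ↦ hV.1

theorem subset_adStabilizer_adClosure : S ⊆ (adClosure R S Y).adStabilizer := by
  intro a ha u hu
  exact Submodule.mem_sInf.2 fun V hV ↦ hV.2 ha u (Submodule.mem_sInf.1 hu V hV)

theorem adClosure_le {V : Submodule R L} (hY : Y ∈ V) (hS : S ⊆ V.adStabilizer) :
    adClosure R S Y ≤ V :=
  sInf_le ⟨hY, hS⟩

/-- The `u` in the closure with `⁅A, u⁆` inside the closure form a submodule containing `Y`, which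
the Leibniz rule shows to be stable under `S`. -/
theorem subset_adStabilizer_adClosure_of_lie_mem {A : Set L}
    (hA : ∀ x ∈ A, ⁅x, Y⁆ ∈ adClosure R S Y) (hSA : ∀ a ∈ S, ∀ x ∈ A, ⁅x, a⁆ ∈ S ∪ A) :
    A ⊆ (adClosure R S Y).adStabilizer := by
  set U := adClosure R S Y
  let V : Submodule R L :=
    { carrier := {u | u ∈ U ∧ ∀ x ∈ A, ⁅x, u⁆ ∈ U}
      zero_mem' := ⟨U.zero_mem, fun x _ ↦ by simp⟩
      add_mem' := fun hu hv ↦ ⟨U.add_mem hu.1 hv.1, fun x hx ↦ by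
        simpa only [lie_add] using U.add_mem (hu.2 x hx) (hv.2 x hx)⟩
      smul_mem' := fun t u hu ↦ ⟨U.smul_mem t hu.1, fun x hx ↦ by
        simpa only [lie_smul] using U.smul_mem t (hu.2 x hx)⟩ }
  have hUV : U ≤ V := by
    refine adClosure_le ⟨mem_adClosure_self, hA⟩ fun a ha u hu ↦ ?_
    refine ⟨subset_adStabilizer_adClosure ha u hu.1, fun x hx ↦ ?_⟩
    rw [leibniz_lie]
    refine U.add_mem ?_ (subset_adStabilizer_adClosure ha _ (hu.2 x hx))
    rcases hSA a ha x hx with hxa | hxa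
    · exact subset_adStabilizer_adClosure hxa u hu.1
    · exact hu.2 _ hxa
  exact fun x hx u hu ↦ (hUV hu).2 x hx

end LieAlgebra

section Grading

variable {R L : Type*} [CommRing R] [LieRing L] [LieAlgebra R L] {g : ℤ → Submodule R L}

theorem lie_mem_iSup_le_add (hbracket : ∀ i j : ℤ, ∀ x ∈ g i, ∀ y ∈ g j, ⁅x, y⁆ ∈ g (i + j))
    {j m : ℤ} {a v : L} (ha : a ∈ g j) (hv : v ∈ ⨆ l ≤ m, g l) : ⁅a, v⁆ ∈ ⨆ l ≤ j + m, g l := by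
  suffices h : ⨆ l ≤ m, g l ≤ (⨆ l ≤ j + m, g l).comap (LieAlgebra.ad R L a) from h hv
  refine iSup₂_le fun l hl w hw ↦ ?_
  exact le_iSup₂_of_le (f := fun l (_ : l ≤ j + m) ↦ g l) (j + l) (by omega) le_rfl
    (hbracket j l a ha w hw)

theorem adClosure_nonpos_le_iSup_le
    (hbracket : ∀ i j : ℤ, ∀ x ∈ g i, ∀ y ∈ g j, ⁅x, y⁆ ∈ g (i + j)) {i : ℤ} {Y : L}
    (hY : Y ∈ g i) : LieAlgebra.adClosure R {a | ∃ j ≤ 0, a ∈ g j} Y ≤ ⨆ l ≤ i, g l := by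
  have hYi : Y ∈ ⨆ l ≤ i, g l := le_iSup₂_of_le (f := fun l (_ : l ≤ i) ↦ g l) i le_rfl le_rfl hY
  refine LieAlgebra.adClosure_le hYi ?_
  rintro a ⟨j, hj, ha⟩ v hv
  have hmono : ⨆ l ≤ j + i, g l ≤ ⨆ l ≤ i, g l := biSup_mono fun l hl ↦ by omega
  exact hmono (lie_mem_iSup_le_add hbracket ha hv)

theorem le_toSubmodule_of_degree_one_le {ν : ℤ} (hdepth : ∀ i : ℤ, ν < |i| → g i = ⊥)
    (hgen : ∀ i : ℤ, 1 ≤ i → i < ν →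
      g (i + 1) = Submodule.span R {z : L | ∃ x ∈ g 1, ∃ y ∈ g i, ⁅x, y⁆ = z})
    {H : LieSubalgebra R L} (h1 : g 1 ≤ H.toSubmodule) : ∀ j, 1 ≤ j → g j ≤ H.toSubmodule := by
  refine Int.leInduction h1 fun j hj ih ↦ ?_
  rcases lt_or_ge j ν with hjν | hjν
  · rw [hgen j hj hjν, Submodule.span_le]
    rintro _ ⟨x, hx, y, hy, rfl⟩
    exact H.lie_mem (h1 hx) (ih hy)
  · rw [hdepth (j + 1) (by rw [abs_of_pos (by omega)]; omega)]
    exact bot_le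

end Grading

theorem stmt1_general {k : Type*} [Field k]
    {L : Type*} [LieRing L] [LieAlgebra k L]
    [LieAlgebra.IsSimple k L]
    (g : ℤ → Submodule k L)
    (hdirect : DirectSum.IsInternal g)
    (hbracket : ∀ i j : ℤ, ∀ x ∈ g i, ∀ y ∈ g j, ⁅x, y⁆ ∈ g (i + j))
    (ν : ℤ)
    (hdepth : ∀ i : ℤ, ν < |i| → g i = ⊥)
    (htop : g ν ≠ ⊥)
    (hgen : ∀ i : ℤ, 1 ≤ i → i < ν →
      g (i + 1) = Submodule.span k {z : L | ∃ x ∈ g 1, ∃ y ∈ g i, ⁅x, y⁆ = z})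
    (i : ℤ) (hiν : i < ν) :
    ∀ Y ∈ g i, (∀ x ∈ g 1, ⁅Y, x⁆ = 0) → Y = 0 := by
  intro Y hYi hY
  set S : Set L := {a | ∃ j ≤ 0, a ∈ g j}
  set U := LieAlgebra.adClosure k S Y
  have hS : S ⊆ U.adStabilizer := LieAlgebra.subset_adStabilizer_adClosure
  have h1 : g 1 ≤ U.adStabilizer.toSubmodule := by
    refine LieAlgebra.subset_adStabilizer_adClosure_of_lie_mem (fun x hx ↦ ?_)
      fun a ⟨j, hj, ha⟩ x hx ↦ ?_
    · rw [← lie_skew, hY x hx, neg_zero]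
      exact U.zero_mem
    · rcases hj.lt_or_eq with hj | rfl
      · exact .inl ⟨1 + j, by omega, hbracket 1 j x hx a ha⟩
      · exact .inr (hbracket 1 0 x hx a ha)
  have hideal : U.adStabilizer = ⊤ := by
    rw [eq_top_iff, ← LieSubalgebra.toSubmodule_le_toSubmodule, LieSubalgebra.top_toSubmodule,
      ← hdirect.submodule_iSup_eq_top]
    refine iSup_le fun j ↦ ?_
    rcases le_or_gt j 0 with hj | hj
    · exact fun a ha ↦ hS ⟨j, hj, ha⟩
    · exact le_toSubmodule_of_degree_one_le hdepth hgen h1 j hj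
  have hUi : U ≤ ⨆ l ≤ i, g l := adClosure_nonpos_le_iSup_le hbracket hYi
  have hdisj : Disjoint (g ν) (⨆ l ≤ i, g l) :=
    hdirect.submodule_iSupIndep.disjoint_biSup (y := Set.Iic i) hiν.not_ge
  rcases U.eq_bot_or_eq_top_of_adStabilizer_eq_top hideal with hU | hU
  · exact (Submodule.mem_bot k).1 (hU ▸ LieAlgebra.mem_adClosure_self)
  · exact absurd (hdisj.eq_bot_of_le ((le_top.trans_eq hU.symm).trans hUi)) htop

/-- Let `𝔤` be a finite-dimensional simple Lie algebra over a field of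
characteristic zero, with a ℤ-grading of depth `ν ≥ 1` such that `𝔤_{i+1} = ⁅𝔤_1, 𝔤_i⁆`
for `1 ≤ i < ν`.  Then for every `0 < i < ν` the centralizer of `𝔤_1` in `𝔤_i` is trivial. -/
theorem stmt1 {k : Type*} [Field k] [CharZero k]
    {L : Type*} [LieRing L] [LieAlgebra k L] [FiniteDimensional k L]
    [LieAlgebra.IsSimple k L]
    (g : ℤ → Submodule k L)
    (hdirect : DirectSum.IsInternal g)
    (hbracket : ∀ i j : ℤ, ∀ x ∈ g i, ∀ y ∈ g j, ⁅x, y⁆ ∈ g (i + j))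
    (ν : ℤ) (hν : 1 ≤ ν)
    (hdepth : ∀ i : ℤ, ν < |i| → g i = ⊥)
    (htop : g ν ≠ ⊥)
    (hgen : ∀ i : ℤ, 1 ≤ i → i < ν →
      g (i + 1) = Submodule.span k {z : L | ∃ x ∈ g 1, ∃ y ∈ g i, ⁅x, y⁆ = z})
    (i : ℤ) (hi0 : 0 < i) (hiν : i < ν) :
    ∀ Y ∈ g i, (∀ x ∈ g 1, ⁅Y, x⁆ = 0) → Y = 0 :=
  stmt1_general g hdirect hbracket ν hdepth htop hgen i hiν
end

section
/- Let L be a Lie algebra over a commutative ring R, let M be an R-module, and let ρ : L → End_R(M) be a representation of L on M, i.e. an R-linear map satisfying ρ(⁅x, y⁆) = ρ(x) ∘ ρ(y) − ρ(y) ∘ ρ(x) for all x, y ∈ L. Then for all r, t_1, …, t_n ∈ L the following operator identity holds: ρ(t_n) ∘ ρ(t_{n−1}) ∘ ⋯ ∘ ρ(t_1) ∘ ρ(r) = Σ_{S ⊆ {1,…,n}} ρ( ad(t_{s_m}) ad(t_{s_{m−1}}) ⋯ ad(t_{s_1}) (r) ) ∘ ρ(t_{u_p}) ∘ ρ(t_{u_{p−1}})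 ∘ ⋯ ∘ ρ(t_{u_1}), where for each subset S of {1,…,n}, s_1 < s_2 < … < s_m are the elements of S listed in increasing order, u_1 < u_2 < … < u_p are the elements of the complement {1,…,n} \ S listed in increasing order, and ad(x)(y) = ⁅x, y⁆ (the summand for S = ∅ is ρ(r) ∘ ρ(t_n) ∘ ⋯ ∘ ρ(t_1)). -/
/-!
Induct on the set of indices, peeling off the largest one `a`, i.e. the outermost factor
`ρ(tₐ)`. Pushing it past `ρ(x)` via `ρ(tₐ) ρ(x) = ρ⁅tₐ, x⁆ + ρ(x) ρ(tₐ)` splits every summand in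
two: in the first `a` joins `S` (as the outermost `ad`), in the second it joins the complement
(as the outermost factor). These are exactly the two halves of the sum over subsets with or
without `a`.
-/

open Finset

namespace Finset

variable {ι : Type*} [LinearOrder ι]

theorem sort_insert_of_forall_lt {s : Finset ι} {a : ι} (ha : ∀ i ∈ s, i < a) :
    (insert a s).sort (· ≤ ·) = s.sort (· ≤ ·) ++ [a] := by
  have has : a ∉ s := fun h => (ha a h).false
  refine List.Perm.eq_of_pairwise' (r := (· ≤ ·)) (pairwise_sort _ _) ?_ ?_
  · exact List.pairwise_append.2
      ⟨pairwise_sort _ _, by simp, by simpa using fun i hi => (ha i hi).le⟩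
  · refine (List.perm_ext_iff_of_nodup (sort_nodup _ _) ?_).2 fun i => by simp [or_comm]
    simpa [List.nodup_append] using has

theorem foldl_sort_insert_of_forall_lt {β : Type*} (f : β → ι → β) (b : β) {s : Finset ι}
    {a : ι} (ha : ∀ i ∈ s, i < a) :
    ((insert a s).sort (· ≤ ·)).foldl f b = f ((s.sort (· ≤ ·)).foldl f b) a := by
  rw [sort_insert_of_forall_lt ha, List.foldl_concat]

end Finset

theorem foldl_sort_mul_eq_sum_powerset {ι L A : Type*} [LinearOrder ι] [Bracket L L] [Ring A]
    (ρ : L → A) (hρ : ∀ x y : L, ρ ⁅x, y⁆ = ρ x * ρ y - ρ y * ρ x)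
    (t : ι → L) (r : L) (T : Finset ι) :
    (T.sort (· ≤ ·)).foldl (fun f i => ρ (t i) * f) (ρ r)
      = ∑ S ∈ T.powerset,
          ρ ((S.sort (· ≤ ·)).foldl (fun x i => ⁅t i, x⁆) r)
            * (((T \ S).sort (· ≤ ·)).foldl (fun f i => ρ (t i) * f) 1) := by
  induction T using Finset.induction_on_max with
  | empty => simp
  | insert a T haT ih =>
    have haT' : a ∉ T := fun h => (haT a h).false
    have hcommute (x : L) : ρ (t a) * ρ x = ρ ⁅t a, x⁆ + ρ x * ρ (t a) := by
      rw [hρ, sub_add_cancel]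
    rw [foldl_sort_insert_of_forall_lt _ _ haT, ih, mul_sum, sum_powerset_insert haT',
      add_comm, ← sum_add_distrib]
    refine sum_congr rfl fun S hS => ?_
    have hSa : ∀ i ∈ S, i < a := fun i hi => haT i (mem_powerset.1 hS hi)
    have hTSa : ∀ i ∈ T \ S, i < a := fun i hi => haT i (mem_sdiff.1 hi).1
    rw [insert_sdiff_insert, sdiff_insert_of_notMem haT', foldl_sort_insert_of_forall_lt _ _ hSa,
      insert_sdiff_of_notMem _ fun h => haT' (mem_powerset.1 hS h),
      foldl_sort_insert_of_forall_lt _ _ hTSa, ← mul_assoc, hcommute, add_mul, mul_assoc]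

/-- Let `ρ : L → End R M` be a representation of a Lie algebra `L` over a
commutative ring `R` on an `R`-module `M`.  Then for all `r, t₁, …, tₙ ∈ L`,
`ρ(tₙ) ∘ ⋯ ∘ ρ(t₁) ∘ ρ(r) = Σ_{S ⊆ {1,…,n}} ρ(ad(t_{s_m})⋯ad(t_{s_1}) r) ∘ ρ(t_{u_p}) ∘ ⋯ ∘ ρ(t_{u_1})`,
where `s_1 < … < s_m` enumerate `S` and `u_1 < … < u_p` enumerate its complement. -/
theorem stmt4 {R : Type*} [CommRing R] {L : Type*} [LieRing L] [LieAlgebra R L]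
    {M : Type*} [AddCommGroup M] [Module R M]
    (ρ : L →ₗ[R] Module.End R M)
    (hρ : ∀ x y : L, ρ ⁅x, y⁆ = ρ x * ρ y - ρ y * ρ x)
    (n : ℕ) (t : Fin n → L) (r : L) :
    ((Finset.univ : Finset (Fin n)).sort (· ≤ ·)).foldl (fun f i => ρ (t i) * f) (ρ r)
      = ∑ S : Finset (Fin n),
          ρ ((S.sort (· ≤ ·)).foldl (fun x i => ⁅t i, x⁆) r)
            * ((Sᶜ.sort (· ≤ ·)).foldl (fun f i => ρ (t i) * f) 1) := by
  simpa only [powerset_univ, compl_eq_univ_sdiff] using foldl_sort_mul_eq_sum_powerset ρ hρ t r univ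
end

section
/- Let 𝔤 be a finite-dimensional Lie algebra over an algebraically closed field of characteristic zero whose Killing form is nondegenerate, and let 𝔥 ⊆ 𝔤 be a splitting Cartan subalgebra with set of roots Δ. Let β_1, …, β_m ∈ Δ be roots such that for all a ≠ b, neither β_a + β_b nor β_a − β_b is zero or a root. Suppose that for each i = 1, …, m we are given an sl₂-triple (e_i, h_i, f_i) with e_i in the root space 𝔤_{β_i} and f_i in the root space 𝔤_{−β_i}. Then (Σ_{i=1}^m e_i, Σ_{i=1}^m h_i, Σ_{i=1}^m f_i) is again an sl₂-triple: setting E = Σ e_i, H = Σ h_i, F = Σ f_i, one has ⁅H, E⁆ = 2E, ⁅H, F⁆ = −2F, and ⁅E, F⁆ = H. -/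
/-- The root space of a linear functional `β` on a subalgebra `H ⊆ L`:
`{x ∈ L : ⁅h, x⁆ = β(h) • x for all h ∈ H}`. -/
def rootSpaceOf {k L : Type*} [Field k] [LieRing L] [LieAlgebra k L]
    (H : LieSubalgebra k L) (β : Module.Dual k H) : Set L :=
  {x : L | ∀ h : H, ⁅(h : L), x⁆ = β h • x}

/-- `β` is a root of `(L, H)` if it is nonzero and has a nonzero root vector. -/
def IsRootOf {k L : Type*} [Field k] [LieRing L] [LieAlgebra k L]
    (H : LieSubalgebra k L) (β : Module.Dual k H) : Prop :=
  β ≠ 0 ∧ ∃ x ∈ rootSpaceOf H β, x ≠ 0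

/-- Brackets of root vectors lie in the root space of the sum. -/
lemma lie_mem_rootSpaceOf {k L : Type*} [Field k] [LieRing L] [LieAlgebra k L]
    {H : LieSubalgebra k L} {α γ : Module.Dual k H} {x y : L}
    (hx : x ∈ rootSpaceOf H α) (hy : y ∈ rootSpaceOf H γ) :
    ⁅x, y⁆ ∈ rootSpaceOf H (α + γ) := by
  intro h
  rw [leibniz_lie, hx h, hy h, smul_lie, lie_smul]
  simp [add_smul]

/-- A non-root nonzero functional has trivial root space. -/
lemma rootSpaceOf_trivial {k L : Type*} [Field k] [LieRing L] [LieAlgebra k L]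
    {H : LieSubalgebra k L} {γ : Module.Dual k H}
    (h0 : γ ≠ 0) (hnr : ¬ IsRootOf H γ) {x : L} (hx : x ∈ rootSpaceOf H γ) : x = 0 := by
  by_contra hne
  exact hnr ⟨h0, x, hx, hne⟩

/-- Let `𝔤` be a finite-dimensional Lie algebra over an algebraically closed
field of characteristic zero whose Killing form is nondegenerate, `𝔥` a splitting Cartan
subalgebra with root set `Δ`, and `β₁, …, β_m` roots such that for `a ≠ b` neither `β_a + β_b`
nor `β_a - β_b` is zero or a root.  If `(e_i, h_i, f_i)` are sl₂-triples with
`e_i ∈ 𝔤_{β_i}` and `f_i ∈ 𝔤_{-β_i}`, then `(Σ e_i, Σ h_i, Σ f_i)` is again an sl₂-triple. -/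
theorem stmt5 {k : Type*} [Field k] [IsAlgClosed k] [CharZero k]
    {L : Type*} [LieRing L] [LieAlgebra k L] [FiniteDimensional k L]
    (hkill : (killingForm k L).Nondegenerate)
    (H : LieSubalgebra k L) (hH : H.IsCartanSubalgebra)
    (m : ℕ) (β : Fin m → Module.Dual k H)
    (hβroot : ∀ a, IsRootOf H (β a))
    (horth : ∀ a b : Fin m, a ≠ b →
      β a + β b ≠ 0 ∧ ¬ IsRootOf H (β a + β b) ∧
      β a - β b ≠ 0 ∧ ¬ IsRootOf H (β a - β b))
    (e h f : Fin m → L)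
    (he : ∀ a, e a ∈ rootSpaceOf H (β a))
    (hf : ∀ a, f a ∈ rootSpaceOf H (-β a))
    (hsl2 : ∀ a, ⁅h a, e a⁆ = (2 : k) • e a ∧ ⁅h a, f a⁆ = (-2 : k) • f a ∧
      ⁅e a, f a⁆ = h a) :
    ⁅∑ a, h a, ∑ a, e a⁆ = (2 : k) • ∑ a, e a ∧
    ⁅∑ a, h a, ∑ a, f a⁆ = (-2 : k) • ∑ a, f a ∧
    ⁅∑ a, e a, ∑ a, f a⁆ = ∑ a, h a := by
  -- cross brackets vanish
  have hee : ∀ a b : Fin m, a ≠ b → ⁅e a, e b⁆ = 0 := fun a b hab =>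
    rootSpaceOf_trivial (horth a b hab).1 (horth a b hab).2.1
      (lie_mem_rootSpaceOf (he a) (he b))
  have hef : ∀ a b : Fin m, a ≠ b → ⁅e a, f b⁆ = 0 := by
    intro a b hab
    have := lie_mem_rootSpaceOf (he a) (hf b)
    rw [show β a + -β b = β a - β b by abel] at this
    exact rootSpaceOf_trivial (horth a b hab).2.2.1 (horth a b hab).2.2.2 this
  have hfe : ∀ a b : Fin m, a ≠ b → ⁅f a, e b⁆ = 0 := by
    intro a b hab
    have := lie_mem_rootSpaceOf (hf a) (he b)
    rw [show -β a + β b = β b - β a by abel] at this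
    exact rootSpaceOf_trivial (horth b a hab.symm).2.2.1 (horth b a hab.symm).2.2.2 this
  -- h a lies in H
  have hin : ∀ a, h a ∈ H := by
    intro a
    have hmem : h a ∈ rootSpaceOf H (0 : Module.Dual k H) := by
      have := lie_mem_rootSpaceOf (he a) (hf a)
      rwa [add_neg_cancel, (hsl2 a).2.2] at this
    rw [← hH.self_normalizing, H.mem_normalizer_iff]
    intro y hy
    have := hmem ⟨y, hy⟩
    simp only [LinearMap.zero_apply, zero_smul] at this
    rw [← lie_skew, this, neg_zero]
    exact H.zero_mem
  have hhe : ∀ a b : Fin m, a ≠ b → ⁅h a, e b⁆ = 0 := by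
    intro a b hab
    rw [← (hsl2 a).2.2, lie_lie, hfe a b hab, hee a b hab, lie_zero, lie_zero, sub_zero]
  have hhf : ∀ a b : Fin m, a ≠ b → ⁅h a, f b⁆ = 0 := by
    intro a b hab
    rcases eq_or_ne (e b) 0 with hb | hb
    · -- then h b = 0 and f b = 0
      have hhb : h b = 0 := by rw [← (hsl2 b).2.2, hb, zero_lie]
      have : (0 : L) = (-2 : k) • f b := by rw [← (hsl2 b).2.1, hhb, zero_lie]
      have hfb : f b = 0 := by
        rcases smul_eq_zero.mp this.symm with h' | h'
        · exact absurd h' (by norm_num)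
        · exact h'
      rw [hfb, lie_zero]
    · have hβ0 : β b ⟨h a, hin a⟩ = 0 := by
        have h1 := he b ⟨h a, hin a⟩
        rw [hhe a b hab] at h1
        rcases smul_eq_zero.mp h1.symm with h' | h'
        · exact h'
        · exact absurd h' hb
      have h2 := hf b ⟨h a, hin a⟩
      rw [h2]
      simp [hβ0]
  -- assemble the sums
  have lie_sum : ∀ (x : L) (g : Fin m → L), ⁅x, ∑ a, g a⁆ = ∑ a, ⁅x, g a⁆ := fun x g =>
    map_sum (LieAlgebra.ad k L x) g Finset.univ
  have sum_lie : ∀ (g : Fin m → L) (y : L), ⁅∑ a, g a, y⁆ = ∑ a, ⁅g a, y⁆ := by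
    intro g y
    rw [← lie_skew, lie_sum, ← Finset.sum_neg_distrib]
    exact Finset.sum_congr rfl fun a _ => lie_skew _ _
  refine ⟨?_, ?_, ?_⟩
  · rw [lie_sum, Finset.smul_sum]
    refine Finset.sum_congr rfl fun b _ => ?_
    rw [sum_lie]
    rw [Finset.sum_eq_single b (fun a _ hab => hhe a b hab) (by simp)]
    exact (hsl2 b).1
  · rw [lie_sum, Finset.smul_sum]
    refine Finset.sum_congr rfl fun b _ => ?_
    rw [sum_lie]
    rw [Finset.sum_eq_single b (fun a _ hab => hhf a b hab) (by simp)]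
    exact (hsl2 b).2.1
  · rw [lie_sum]
    refine Finset.sum_congr rfl fun b _ => ?_
    rw [sum_lie]
    rw [Finset.sum_eq_single b (fun a _ hab => hef a b hab) (by simp)]
    exact (hsl2 b).2.2
end

section
/- Consider the polynomial vector field S on ℝ⁵ with coordinates (t, x₁, x₂, p₁, p₂) given by S(t, x₁, x₂, p₁, p₂) = (t², t x₁, ½x₁³ + t x₂, x₁ − t p₁, x₂ + (3/2) x₁² p₁ − t p₂), i.e. S = t²∂_t + t x₁ ∂_{x₁} + (½x₁³ + t x₂) ∂_{x₂} + (x₁ − t p₁) ∂_{p₁} + (x₂ + (3/2) x₁² p₁ − t p₂) ∂_{p₂}. Then S is not smoothly linearizable around its fixed point 0: there do not exist open neighborhoods U, V of 0 in ℝ⁵, a C^∞ diffeomorphism φ : U → V with φ(0) = 0, and a linear map L : ℝ⁵ → ℝ⁵, such that Dφ(y)(S(y)) = L(φ(y)) for all y ∈ U. -/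
/-- The symmetry vector field `S = t²∂_t + t x₁ ∂_{x₁} + (½x₁³ + t x₂) ∂_{x₂}
+ (x₁ − t p₁) ∂_{p₁} + (x₂ + (3/2) x₁² p₁ − t p₂) ∂_{p₂}` on `ℝ⁵` with coordinates
`(t, x₁, x₂, p₁, p₂) = (y 0, y 1, y 2, y 3, y 4)`. -/
noncomputable def symField : (Fin 5 → ℝ) → (Fin 5 → ℝ) := fun y =>
  ![y 0 ^ 2,
    y 0 * y 1,
    (1 / 2) * y 1 ^ 3 + y 0 * y 2,
    y 1 - y 0 * y 3,
    y 2 + (3 / 2) * y 1 ^ 2 * y 3 - y 0 * y 4]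

open ContinuousLinearMap

noncomputable def pr (i : Fin 5) : (Fin 5 → ℝ) →L[ℝ] ℝ := proj i

noncomputable def Nmap : (Fin 5 → ℝ) →L[ℝ] (Fin 5 → ℝ) :=
  ContinuousLinearMap.pi ![0, 0, 0, pr 1, pr 2]

def e0 : Fin 5 → ℝ := fun i => if i = 0 then 1 else 0

lemma symField_zero : symField 0 = 0 := by
  funext i; fin_cases i <;> simp [symField]

lemma symField_line (t : ℝ) : symField (t • e0) = (t ^ 2) • e0 := by
  funext i; fin_cases i <;> simp [symField, e0]

lemma Nmap_e0 : Nmap e0 = 0 := by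
  funext i; fin_cases i <;> simp [Nmap, pr, e0]

lemma Nmap_sq (v : Fin 5 → ℝ) : Nmap (Nmap v) = 0 := by
  funext i; fin_cases i <;> simp [Nmap, pr]

lemma hasFDerivAt_symField : HasFDerivAt symField Nmap 0 := by
  have c : ∀ i : Fin 5, HasFDerivAt (fun y : Fin 5 → ℝ => y i) (pr i) 0 :=
    fun i => (pr i).hasFDerivAt
  apply hasFDerivAt_pi''
  intro i
  fin_cases i <;>
    simp only [symField, Matrix.cons_val_zero, Matrix.cons_val_one, Matrix.head_cons,
      Matrix.cons_val_two, Matrix.tail_cons, Matrix.cons_val_three, Matrix.cons_val_four,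
      pow_succ, pow_zero, one_mul, Fin.isValue]
  · exact ((c 0).mul (c 0)).congr_fderiv (by ext v; simp [Nmap, pr])
  · exact ((c 0).mul (c 1)).congr_fderiv (by ext v; simp [Nmap, pr])
  · exact ((((c 1).mul (c 1)).mul (c 1)).const_mul ((1:ℝ)/2)|>.add ((c 0).mul (c 2))).congr_fderiv
      (by ext v; simp [Nmap, pr])
  · exact ((c 1).sub ((c 0).mul (c 3))).congr_fderiv (by ext v; simp [Nmap, pr])
  · exact (((c 2).add ((((c 1).mul (c 1)).const_mul ((3:ℝ)/2)).mul (c 3))).sub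
      ((c 0).mul (c 4))).congr_fderiv (by ext v; simp [Nmap, pr])

/-- The vector field `symField` is not smoothly linearizable around its
fixed point `0`: there are no open neighbourhoods `U, V` of `0`, no `C^∞` diffeomorphism
`φ : U → V` with `φ(0) = 0`, and no linear map `L : ℝ⁵ → ℝ⁵` with
`Dφ(y)(S(y)) = L(φ(y))` for all `y ∈ U`. -/
theorem stmt11 :
    ¬ ∃ (U V : Set (Fin 5 → ℝ)) (φ ψ : (Fin 5 → ℝ) → (Fin 5 → ℝ))
        (L : (Fin 5 → ℝ) →ₗ[ℝ] (Fin 5 → ℝ)),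
      IsOpen U ∧ IsOpen V ∧ (0 : Fin 5 → ℝ) ∈ U ∧ (0 : Fin 5 → ℝ) ∈ V ∧
      φ 0 = 0 ∧
      ContDiffOn ℝ (⊤ : ℕ∞) φ U ∧ ContDiffOn ℝ (⊤ : ℕ∞) ψ V ∧
      φ '' U = V ∧ (∀ y ∈ U, ψ (φ y) = y) ∧ (∀ z ∈ V, φ (ψ z) = z) ∧
      (∀ y ∈ U, fderiv ℝ φ y (symField y) = L (φ y)) := by
  rintro ⟨U, V, φ, ψ, L, hU, hV, hU0, hV0, hφ0, hφ, hψ, -, hψφ, -, hconj⟩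
  set A := fderiv ℝ φ 0 with hAdef
  set Lc : (Fin 5 → ℝ) →L[ℝ] (Fin 5 → ℝ) := LinearMap.toContinuousLinearMap L with hLcdef
  have hLc : ∀ z, Lc z = L z := fun z => rfl
  have hφdiff : ∀ y ∈ U, DifferentiableAt ℝ φ y := fun y hy =>
    (hφ.contDiffAt (hU.mem_nhds hy)).differentiableAt (by simp)
  -- Step 1 : A ∘ N = Lc ∘ A
  have hΦ : DifferentiableAt ℝ (fderiv ℝ φ) 0 :=
    ((hφ.contDiffAt (hU.mem_nhds hU0)).fderiv_right (m := 1) (by exact WithTop.coe_le_coe.2 le_top)).differentiableAt (by simp)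
  have hder1 : HasFDerivAt (fun y => fderiv ℝ φ y (symField y)) (A.comp Nmap) 0 := by
    have h := hΦ.hasFDerivAt.clm_apply hasFDerivAt_symField
    rw [symField_zero] at h
    simpa using h
  have hder2 : HasFDerivAt (fun y => Lc (φ y)) (Lc.comp A) 0 :=
    Lc.hasFDerivAt.comp 0 (hφdiff 0 hU0).hasFDerivAt
  have heq : (fun y => Lc (φ y)) =ᶠ[nhds 0] (fun y => fderiv ℝ φ y (symField y)) := by
    filter_upwards [hU.mem_nhds hU0] with y hy
    exact (hconj y hy).symm
  have hkey : A.comp Nmap = Lc.comp A :=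
    (hder1.congr_of_eventuallyEq heq).unique hder2
  have hkey' : ∀ v, A (Nmap v) = Lc (A v) := fun v => ContinuousLinearMap.ext_iff.1 hkey v
  -- Step 2 : A is surjective
  have hψd : DifferentiableAt ℝ ψ 0 := (hψ.contDiffAt (hV.mem_nhds hV0)).differentiableAt (by simp)
  have hBA : ∀ v, fderiv ℝ ψ 0 (A v) = v := by
    have hψd' : HasFDerivAt ψ (fderiv ℝ ψ 0) (φ 0) := by rw [hφ0]; exact hψd.hasFDerivAt
    have hcomp : HasFDerivAt (fun y => ψ (φ y)) ((fderiv ℝ ψ 0).comp A) 0 :=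
      hψd'.comp 0 (hφdiff 0 hU0).hasFDerivAt
    have hid : HasFDerivAt (fun y : Fin 5 → ℝ => y) (ContinuousLinearMap.id ℝ _) 0 :=
      hasFDerivAt_id 0
    have heq2 : (fun y => ψ (φ y)) =ᶠ[nhds 0] (fun y : Fin 5 → ℝ => y) := by
      filter_upwards [hU.mem_nhds hU0] with y hy
      exact hψφ y hy
    have : (fderiv ℝ ψ 0).comp A = ContinuousLinearMap.id ℝ _ :=
      hcomp.unique (hid.congr_of_eventuallyEq heq2)
    intro v
    simpa using ContinuousLinearMap.ext_iff.1 this v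
  have hAinj : Function.Injective A := fun a b hab => by
    rw [← hBA a, ← hBA b, hab]
  have hAsurj : Function.Surjective A := by
    have := LinearMap.surjective_of_injective (f := (A : (Fin 5 → ℝ) →ₗ[ℝ] (Fin 5 → ℝ))) hAinj
    exact this
  -- L² = 0
  have hL2 : ∀ z, Lc (Lc z) = 0 := by
    intro z
    obtain ⟨w, rfl⟩ := hAsurj z
    rw [← hkey' w, ← hkey' (Nmap w), Nmap_sq, map_zero]
  -- Step 3 : find ε with the segment inside U
  have hcont : Continuous (fun t : ℝ => t • e0) := continuous_id.smul continuous_const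
  have hpre : (fun t : ℝ => t • e0) ⁻¹' U ∈ nhds (0 : ℝ) := by
    apply hcont.continuousAt.preimage_mem_nhds
    simpa using hU.mem_nhds hU0
  obtain ⟨ε, hε, hball⟩ := Metric.mem_nhds_iff.1 hpre
  have hmem : ∀ t : ℝ, |t| < ε → t • e0 ∈ U := by
    intro t ht
    apply hball
    simpa [Real.dist_eq] using ht
  -- derivative of g t = φ (t • e0)
  have hg : ∀ t : ℝ, |t| < ε →
      HasDerivAt (fun s : ℝ => φ (s • e0)) (fderiv ℝ φ (t • e0) e0) t := by
    intro t ht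
    have h1 : HasDerivAt (fun s : ℝ => s • e0) e0 t := by
      simpa using (hasDerivAt_id t).smul_const e0
    exact ((hφdiff _ (hmem t ht)).hasFDerivAt).comp_hasDerivAt t h1
  -- the ODE
  have hODE : ∀ t : ℝ, |t| < ε →
      (t ^ 2) • fderiv ℝ φ (t • e0) e0 = Lc (φ (t • e0)) := by
    intro t ht
    have h := hconj (t • e0) (hmem t ht)
    rw [symField_line, map_smul] at h
    rw [h, hLc]
  -- h := Lc ∘ g has zero derivative on (-ε, ε)
  have hh : ∀ t : ℝ, |t| < ε →
      HasDerivAt (fun s : ℝ => Lc (φ (s • e0))) 0 t := by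
    intro t ht
    have h1 : HasDerivAt (fun s : ℝ => Lc (φ (s • e0))) (Lc (fderiv ℝ φ (t • e0) e0)) t :=
      Lc.hasFDerivAt.comp_hasDerivAt t (hg t ht)
    have h2 : Lc (fderiv ℝ φ (t • e0) e0) = 0 := by
      rcases eq_or_ne t 0 with rfl | htne
      · rw [zero_smul]
        calc Lc (A e0) = A (Nmap e0) := (hkey' e0).symm
        _ = 0 := by rw [Nmap_e0, map_zero]
      · have h3 : (t ^ 2) • Lc (fderiv ℝ φ (t • e0) e0) = 0 := by
          rw [← map_smul, hODE t ht, hL2]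
        rcases smul_eq_zero.1 h3 with h4 | h4
        · exact absurd h4 (pow_ne_zero 2 htne)
        · exact h4
    rwa [h2] at h1
  -- hence Lc (φ (s • e0)) = 0 for s ∈ [0, ε)
  have hzero : ∀ s : ℝ, 0 ≤ s → s < ε → Lc (φ (s • e0)) = 0 := by
    intro s hs0 hsε
    have habs : ∀ x : ℝ, x ∈ Set.Icc (0:ℝ) s → |x| < ε := by
      intro x hx
      rw [abs_of_nonneg hx.1]
      exact lt_of_le_of_lt hx.2 hsε
    have hconst := constant_of_has_deriv_right_zero
      (f := fun u : ℝ => Lc (φ (u • e0))) (a := 0) (b := s)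
      (fun x hx => ((hh x (habs x hx)).continuousAt).continuousWithinAt)
      (fun x hx => ((hh x (habs x ⟨hx.1, hx.2.le⟩)).hasDerivWithinAt))
      s (Set.right_mem_Icc.2 hs0)
    simpa [hφ0] using hconst
  -- hence φ is constant on (0, ε)
  have hgzero : ∀ t : ℝ, 0 < t → t < ε → HasDerivAt (fun s : ℝ => φ (s • e0)) 0 t := by
    intro t ht0 htε
    have habs : |t| < ε := by rwa [abs_of_pos ht0]
    have h1 := hODE t habs
    rw [hzero t ht0.le htε] at h1
    rcases smul_eq_zero.1 h1 with h4 | h4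
    · exact absurd h4 (pow_ne_zero 2 ht0.ne')
    · have := hg t habs
      rwa [h4] at this
  have hgc : φ ((ε/2) • e0) = φ ((3*ε/4) • e0) := by
    have h2ε : (0:ℝ) < ε/2 := by linarith
    have hconst := constant_of_has_deriv_right_zero
      (f := fun u : ℝ => φ (u • e0)) (a := ε/2) (b := 3*ε/4)
      (fun x hx => by
        have : |x| < ε := by
          rw [abs_of_pos (lt_of_lt_of_le h2ε hx.1)]
          exact lt_of_le_of_lt hx.2 (by linarith)
        exact ((hg x this).continuousAt).continuousWithinAt)
      (fun x hx => (hgzero x (lt_of_lt_of_le h2ε hx.1)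
        (lt_of_le_of_lt hx.2.le (by linarith))).hasDerivWithinAt)
      (3*ε/4) (Set.right_mem_Icc.2 (by linarith))
    exact hconst.symm
  -- contradiction with injectivity
  have hmem1 : (ε/2) • e0 ∈ U := hmem _ (by rw [abs_of_pos (by linarith)]; linarith)
  have hmem2 : (3*ε/4) • e0 ∈ U := hmem _ (by rw [abs_of_pos (by linarith)]; linarith)
  have : (ε/2 : ℝ) • e0 = (3*ε/4 : ℝ) • e0 := by
    rw [← hψφ _ hmem1, ← hψφ _ hmem2, hgc]
  have h0 : (ε/2 : ℝ) = 3*ε/4 := by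
    have := congrFun this 0
    simpa [e0] using this
  linarith
end
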